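/- arXiv:1411.1793 — 2 statements merged into one kernel-verified Lean document; each statement's English description precedes it below -/
import Mathlib

section
/- Let γ be an oriented simple lattice cycle and let v be a vertex of γ. If γ is counterclockwise oriented then topw(γ,v) = 1/2, and if γ is clockwise oriented then topw(γ,v) = −1/2. -/
/-
At a vertex `v` of `γ`, the outgoing edge of `γ` separates two of the four points of `N_v`.
Their winding numbers differ by the number of traversals of that edge minus the number of
traversals of its reverse, which is `1 - 0` for a simple cycle of length at least three. For a
vertical edge this is read off from the crossing counts directly; for a horizontal edge the
crossings at the two heights differ by a telescoping sum along the cycle. Since the points of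
`N_v` lie off the image, their winding numbers lie in `{0, 1}` (resp. `{-1, 0}`), so the set
of values is that whole pair and its mean is `1/2` (resp. `-1/2`).
-/

open scoped Classical

/-- An oriented simple lattice cycle in the grid graph on `ℤ²`: a cyclic sequence
`v 0, v 1, …, v (n-1), v n = v 0` (encoded as an `n`-periodic function `ℕ → ℤ × ℤ`),
with `n ≥ 4`, vertices pairwise distinct within one period, and consecutive
vertices at Euclidean distance `1`. -/
structure LatticeCycle where
  n : ℕ
  four_le : 4 ≤ n
  v : ℕ → ℤ × ℤ
  periodic : ∀ i, v (i + n) = v i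
  inj : ∀ i j, i < n → j < n → v i = v j → i = j
  step : ∀ i, v (i + 1) - v i = (1, 0) ∨ v (i + 1) - v i = (-1, 0) ∨
    v (i + 1) - v i = (0, 1) ∨ v (i + 1) - v i = (0, -1)

/-- Inclusion of `ℤ²` into `ℝ²`. -/
def toR (v : ℤ × ℤ) : ℝ × ℝ := ((v.1 : ℝ), (v.2 : ℝ))

/-- The image of a lattice cycle: the union of the closed segments `[vᵢ, vᵢ₊₁] ⊆ ℝ²`. -/
def LatticeCycle.image (γ : LatticeCycle) : Set (ℝ × ℝ) :=
  ⋃ i ∈ Finset.range γ.n, segment ℝ (toR (γ.v i)) (toR (γ.v (i + 1)))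

/-- Signed crossing of the directed edge `u → w` with the rightward horizontal ray
from `p`: an edge from `(a,b)` to `(a,b+1)` contributes `+1`, and an edge from
`(a,b+1)` to `(a,b)` contributes `-1`, whenever `a > p₁` and `b ≤ p₂ < b + 1`. -/
noncomputable def vcross (u w : ℤ × ℤ) (p : ℝ × ℝ) : ℤ :=
  if w = (u.1, u.2 + 1) ∧ p.1 < (u.1 : ℝ) ∧ (u.2 : ℝ) ≤ p.2 ∧ p.2 < (u.2 : ℝ) + 1 then 1
  else if u = (w.1, w.2 + 1) ∧ p.1 < (w.1 : ℝ) ∧ (w.2 : ℝ) ≤ p.2 ∧ p.2 < (w.2 : ℝ) + 1 then -1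
  else 0

/-- The winding number of `γ` around `p`: the signed number of directed vertical
edges of `γ` crossing the rightward horizontal ray from `p`. -/
noncomputable def wind (γ : LatticeCycle) (p : ℝ × ℝ) : ℤ :=
  ∑ i ∈ Finset.range γ.n, vcross (γ.v i) (γ.v (i + 1)) p

/-- `γ` is counterclockwise oriented: `wind(γ,p) ∈ {0,1}` for every `p` off the image. -/
def LatticeCycle.ccw (γ : LatticeCycle) : Prop :=
  ∀ p : ℝ × ℝ, p ∉ γ.image → wind γ p = 0 ∨ wind γ p = 1

/-- `γ` is clockwise oriented: `wind(γ,p) ∈ {-1,0}` for every `p` off the image. -/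
def LatticeCycle.cw (γ : LatticeCycle) : Prop :=
  ∀ p : ℝ × ℝ, p ∉ γ.image → wind γ p = -1 ∨ wind γ p = 0

/-- The point `v + (k/2, l/2)`; for `k, l ∈ {-1, 1}` these are the four points of `N_v`. -/
noncomputable def corner (v : ℤ × ℤ) (k l : ℤ) : ℝ × ℝ :=
  ((v.1 : ℝ) + (k : ℝ) / 2, (v.2 : ℝ) + (l : ℝ) / 2)

/-- The metric weight of `v` with respect to `γ`:
`(1/4) · Σ_{u ∈ N_v} wind(γ,u)`. -/
noncomputable def metricw (γ : LatticeCycle) (v : ℤ × ℤ) : ℚ :=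
  ((wind γ (corner v (-1) (-1)) + wind γ (corner v (-1) 1) +
    wind γ (corner v 1 (-1)) + wind γ (corner v 1 1) : ℤ) : ℚ) / 4

/-- The set of values `{wind(γ,u) : u ∈ N_v}` (each distinct value counted once). -/
noncomputable def windSet (γ : LatticeCycle) (v : ℤ × ℤ) : Finset ℤ :=
  {wind γ (corner v (-1) (-1)), wind γ (corner v (-1) 1),
   wind γ (corner v 1 (-1)), wind γ (corner v 1 1)}

/-- The topological weight of `v` with respect to `γ`: the arithmetic mean of the
set of values `{wind(γ,u) : u ∈ N_v}`, each distinct value counted once. -/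
noncomputable def topw (γ : LatticeCycle) (v : ℤ × ℤ) : ℚ :=
  (∑ k ∈ windSet γ v, (k : ℚ)) / ((windSet γ v).card : ℚ)

/-- The angle of `γ` at the vertex of index `i`: with `d_in = vᵢ - vᵢ₋₁` and
`d_out = vᵢ₊₁ - vᵢ`, it is `0` if `d_out = d_in`, `1/4` if `d_out` is `d_in`
rotated by 90° counterclockwise, `-1/4` if rotated by 90° clockwise. -/
noncomputable def angleAt (γ : LatticeCycle) (i : ℕ) : ℚ :=
  let din := γ.v (i + γ.n) - γ.v (i + γ.n - 1)
  let dout := γ.v (i + 1) - γ.v i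
  if dout = din then 0
  else if dout = (-din.2, din.1) then 1/4
  else if dout = (din.2, -din.1) then -1/4
  else 0

/-- `v` is a vertex of `γ`. -/
def LatticeCycle.isVertex (γ : LatticeCycle) (v : ℤ × ℤ) : Prop :=
  ∃ i, i < γ.n ∧ γ.v i = v

/-- The angle of `γ` at a point `v ∈ ℤ²`: the angle at the (unique) index of `v`
if `v` is a vertex of `γ`, and `0` otherwise. -/
noncomputable def angle (γ : LatticeCycle) (v : ℤ × ℤ) : ℚ :=
  if h : γ.isVertex v then angleAt γ h.choose else 0

/-- The color of a lattice point: `1` if `x + y` is odd, `-1` if `x + y` is even. -/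
def col (v : ℤ × ℤ) : ℤ := if Even (v.1 + v.2) then -1 else 1

/-- The enclosed charge `charge_int(γ) = Σ_{v ∈ ℤ², v ∉ image γ} col(v)·wind(γ,v)`. -/
noncomputable def chargeInt (γ : LatticeCycle) : ℤ :=
  ∑ᶠ v : ℤ × ℤ, if toR v ∉ γ.image then col v * wind γ (toR v) else 0

/-- The boundary charge `charge_∂(γ) = Σ_{v vertex of γ} angle(γ,v)·col(v)`. -/
noncomputable def chargeBd (γ : LatticeCycle) : ℚ :=
  ∑ i ∈ Finset.range γ.n, angle γ (γ.v i) * (col (γ.v i) : ℚ)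

lemma intCast_add_half_lt_intCast_iff {a c : ℤ} : (a : ℝ) + 1 / 2 < c ↔ a < c := by
  constructor
  · intro h
    exact_mod_cast (show (a : ℝ) < c by linarith)
  · intro h
    have : (a : ℝ) + 1 ≤ c := by exact_mod_cast h
    linarith

lemma intCast_le_add_half_and_lt_iff {a d : ℤ} :
    (d : ℝ) ≤ a + 1 / 2 ∧ (a : ℝ) + 1 / 2 < d + 1 ↔ d = a := by
  constructor
  · rintro ⟨h₁, h₂⟩
    have h₁ : d < a + 1 := by exact_mod_cast (show (d : ℝ) < a + 1 by linarith)
    have h₂ : a < d + 1 := by exact_mod_cast (show (a : ℝ) < d + 1 by linarith)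
    omega
  · rintro rfl
    constructor <;> linarith

lemma intCast_add_half_ne {a k : ℤ} (hk : Odd k) (m : ℤ) : (a : ℝ) + k / 2 ≠ m := by
  intro h
  have : k = 2 * (m - a) := by exact_mod_cast (show (k : ℝ) = 2 * (m - a) by linarith)
  exact Int.not_even_iff_odd.mpr hk ⟨m - a, by omega⟩

lemma corner_add (z : ℤ × ℤ) (a b k l : ℤ) :
    corner (z + (a, b)) k l = corner z (2 * a + k) (2 * b + l) := by
  simp only [corner, Prod.fst_add, Prod.snd_add, Int.cast_add, Int.cast_mul, Int.cast_ofNat]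
  ext <;> ring

lemma vcross_corner (u w z : ℤ × ℤ) :
    vcross u w (corner z 1 1) =
      if w = u + (0, 1) ∧ z.1 < u.1 ∧ u.2 = z.2 then 1
      else if u = w + (0, 1) ∧ z.1 < w.1 ∧ w.2 = z.2 then -1 else 0 := by
  simp only [vcross, corner, Int.cast_one, and_assoc, intCast_add_half_lt_intCast_iff,
    intCast_le_add_half_and_lt_iff, Prod.ext_iff, Prod.fst_add, Prod.snd_add, add_zero]

lemma vcross_corner_sub_left (u w z : ℤ × ℤ) :
    vcross u w (corner (z + (-1, 0)) 1 1) - vcross u w (corner z 1 1) =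
      (if u = z ∧ w = z + (0, 1) then 1 else 0) - (if u = z + (0, 1) ∧ w = z then 1 else 0) := by
  obtain ⟨u₁, u₂⟩ := u
  obtain ⟨w₁, w₂⟩ := w
  obtain ⟨z₁, z₂⟩ := z
  simp only [vcross_corner, Prod.ext_iff, Prod.mk_add_mk]
  split_ifs <;> omega

-- The first bracket is a coboundary, so it cancels when summed along a cycle.
lemma vcross_corner_sub_below (u w z : ℤ × ℤ)
    (h : w - u = (1, 0) ∨ w - u = (-1, 0) ∨ w - u = (0, 1) ∨ w - u = (0, -1)) :
    vcross u w (corner z 1 1) - vcross u w (corner (z + (0, -1)) 1 1) =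
      ((if u.2 = z.2 ∧ z.1 < u.1 then 1 else 0) - (if w.2 = z.2 ∧ z.1 < w.1 then 1 else 0)) +
      ((if u = z ∧ w = z + (1, 0) then 1 else 0) - (if u = z + (1, 0) ∧ w = z then 1 else 0)) := by
  rcases h with h | h | h | h <;> rw [sub_eq_iff_eq_add] at h <;> subst h <;>
    simp only [vcross_corner, Prod.ext_iff, Prod.fst_add, Prod.snd_add] <;>
    split_ifs <;> omega

namespace LatticeCycle

variable (γ : LatticeCycle)

lemma v_mod (m : ℕ) : γ.v (m % γ.n) = γ.v m := by
  conv_rhs => rw [← Nat.mod_add_div m γ.n]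
  induction m / γ.n with
  | zero => simp
  | succ q ih => rw [Nat.mul_succ, ← add_assoc, γ.periodic, ih]

lemma mod_eq_of_v_eq {i j : ℕ} (h : γ.v i = γ.v j) : i % γ.n = j % γ.n := by
  have hn : 0 < γ.n := by linarith [γ.four_le]
  exact γ.inj _ _ (Nat.mod_lt _ hn) (Nat.mod_lt _ hn) (by rw [v_mod, v_mod, h])

lemma step_fst_eq_or_snd_eq (j : ℕ) :
    (γ.v (j + 1)).1 = (γ.v j).1 ∨ (γ.v (j + 1)).2 = (γ.v j).2 := by
  rcases γ.step j with h | h | h | h <;> rw [sub_eq_iff_eq_add'] at h <;> simp [h]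

def edgeCount (u w : ℤ × ℤ) : ℤ :=
  ∑ j ∈ Finset.range γ.n, if γ.v j = u ∧ γ.v (j + 1) = w then 1 else 0

lemma edgeCount_self_succ {i : ℕ} (hi : i < γ.n) :
    γ.edgeCount (γ.v i) (γ.v (i + 1)) = 1 := by
  have hj : ∀ j ∈ Finset.range γ.n,
      (if γ.v j = γ.v i ∧ γ.v (j + 1) = γ.v (i + 1) then (1 : ℤ) else 0) =
        if i = j then 1 else 0 := by
    intro j hj
    rw [Finset.mem_range] at hj
    by_cases hij : i = j
    · simp [hij]
    · rw [if_neg hij, if_neg fun h => hij (γ.inj i j hi hj h.1.symm)]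
  rw [edgeCount, Finset.sum_congr rfl hj, Finset.sum_ite_eq, if_pos (Finset.mem_range.mpr hi)]

lemma edgeCount_succ_self (i : ℕ) : γ.edgeCount (γ.v (i + 1)) (γ.v i) = 0 := by
  refine Finset.sum_eq_zero fun j _ => if_neg fun ⟨h₁, h₂⟩ => ?_
  have e₁ : j + 1 ≡ i + 1 + 1 [MOD γ.n] := Nat.ModEq.add_right 1 (γ.mod_eq_of_v_eq h₁)
  have e₂ : j + 1 ≡ i + 0 [MOD γ.n] := γ.mod_eq_of_v_eq h₂
  have : γ.n ∣ 2 := Nat.modEq_zero_iff_dvd.mp (Nat.ModEq.add_left_cancel' i (e₁.symm.trans e₂))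
  linarith [Nat.le_of_dvd two_pos this, γ.four_le]

lemma wind_corner_sub_left (z : ℤ × ℤ) :
    wind γ (corner z (-1) 1) - wind γ (corner z 1 1) =
      γ.edgeCount z (z + (0, 1)) - γ.edgeCount (z + (0, 1)) z := by
  have hz : corner z (-1) 1 = corner (z + (-1, 0)) 1 1 := by rw [corner_add]; norm_num
  rw [hz, wind, wind, edgeCount, edgeCount, ← Finset.sum_sub_distrib, ← Finset.sum_sub_distrib]
  exact Finset.sum_congr rfl fun j _ => vcross_corner_sub_left _ _ _

lemma wind_corner_sub_below (z : ℤ × ℤ) :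
    wind γ (corner z 1 1) - wind γ (corner z 1 (-1)) =
      γ.edgeCount z (z + (1, 0)) - γ.edgeCount (z + (1, 0)) z := by
  have hz : corner z 1 (-1) = corner (z + (0, -1)) 1 1 := by rw [corner_add]; norm_num
  set f : ℕ → ℤ := fun j => if (γ.v j).2 = z.2 ∧ z.1 < (γ.v j).1 then 1 else 0
  have htelescope : ∑ j ∈ Finset.range γ.n, (f j - f (j + 1)) = 0 := by
    simp only [Finset.sum_range_sub', f, show γ.v γ.n = γ.v 0 by simpa using γ.periodic 0,
      sub_self]
  rw [hz, wind, wind, edgeCount, edgeCount, ← Finset.sum_sub_distrib, ← Finset.sum_sub_distrib,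
    Finset.sum_congr rfl fun j _ => vcross_corner_sub_below _ _ _ (γ.step j),
    Finset.sum_add_distrib, htelescope, zero_add]

lemma notMem_image_of_forall_ne_intCast {p : ℝ × ℝ} (h₁ : ∀ m : ℤ, p.1 ≠ m)
    (h₂ : ∀ m : ℤ, p.2 ≠ m) : p ∉ γ.image := by
  simp only [image, Set.mem_iUnion, not_exists]
  intro j _ hp
  obtain ⟨hp₁, hp₂⟩ := Prod.segment_subset _ _ hp
  rcases γ.step_fst_eq_or_snd_eq j with h | h
  · simp only [toR, h, segment_same, Set.mem_singleton_iff] at hp₁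
    exact h₁ _ hp₁
  · simp only [toR, h, segment_same, Set.mem_singleton_iff] at hp₂
    exact h₂ _ hp₂

lemma corner_notMem_image (z : ℤ × ℤ) {k l : ℤ} (hk : Odd k) (hl : Odd l) :
    corner z k l ∉ γ.image :=
  γ.notMem_image_of_forall_ne_intCast (intCast_add_half_ne hk) (intCast_add_half_ne hl)

lemma exists_mem_windSet_abs_sub_eq_one {v : ℤ × ℤ} (hv : γ.isVertex v) :
    ∃ a ∈ windSet γ v, ∃ b ∈ windSet γ v, |a - b| = 1 := by
  obtain ⟨i, hi, rfl⟩ := hv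
  have h₁ := γ.edgeCount_self_succ hi
  have h₀ := γ.edgeCount_succ_self i
  rcases γ.step i with h | h | h | h
  · rw [sub_eq_iff_eq_add'] at h
    refine ⟨wind γ (corner (γ.v i) 1 1), by simp [windSet],
      wind γ (corner (γ.v i) 1 (-1)), by simp [windSet], ?_⟩
    rw [γ.wind_corner_sub_below, ← h, h₁, h₀]; norm_num
  · have h' : γ.v i = γ.v (i + 1) + (1, 0) := by
      rw [← sub_eq_iff_eq_add', ← neg_sub, h, Prod.neg_mk]; norm_num
    rw [h'] at h₁ h₀ ⊢
    refine ⟨wind γ (corner (γ.v (i + 1)) 1 1), by simp [windSet, corner_add],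
      wind γ (corner (γ.v (i + 1)) 1 (-1)), by simp [windSet, corner_add], ?_⟩
    rw [γ.wind_corner_sub_below, h₁, h₀]; norm_num
  · rw [sub_eq_iff_eq_add'] at h
    refine ⟨wind γ (corner (γ.v i) (-1) 1), by simp [windSet],
      wind γ (corner (γ.v i) 1 1), by simp [windSet], ?_⟩
    rw [γ.wind_corner_sub_left, ← h, h₁, h₀]; norm_num
  · have h' : γ.v i = γ.v (i + 1) + (0, 1) := by
      rw [← sub_eq_iff_eq_add', ← neg_sub, h, Prod.neg_mk]; norm_num
    rw [h'] at h₁ h₀ ⊢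
    refine ⟨wind γ (corner (γ.v (i + 1)) (-1) 1), by simp [windSet, corner_add],
      wind γ (corner (γ.v (i + 1)) 1 1), by simp [windSet, corner_add], ?_⟩
    rw [γ.wind_corner_sub_left, h₁, h₀]; norm_num

end LatticeCycle

lemma Finset.eq_pair_of_subset_of_abs_sub_eq_one {s : Finset ℤ} {c a b : ℤ}
    (hs : s ⊆ {c, c + 1}) (ha : a ∈ s) (hb : b ∈ s) (hab : |a - b| = 1) : s = {c, c + 1} := by
  refine Finset.eq_of_subset_of_card_le hs ?_
  have hne : a ≠ b := by rintro rfl; simp at hab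
  calc ({c, c + 1} : Finset ℤ).card ≤ 2 := Finset.card_le_two
    _ = ({a, b} : Finset ℤ).card := (Finset.card_pair hne).symm
    _ ≤ s.card := Finset.card_le_card (Finset.insert_subset ha (Finset.singleton_subset_iff.2 hb))

lemma windSet_subset {γ : LatticeCycle} {c : ℤ}
    (h : ∀ p ∉ γ.image, wind γ p = c ∨ wind γ p = c + 1) (v : ℤ × ℤ) :
    windSet γ v ⊆ {c, c + 1} := by
  intro x hx
  simp only [windSet, Finset.mem_insert, Finset.mem_singleton] at hx ⊢
  rcases hx with rfl | rfl | rfl | rfl <;>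
    exact h _ (γ.corner_notMem_image v (by decide) (by decide))

lemma topw_eq_of_windSet_eq {γ : LatticeCycle} {v : ℤ × ℤ} {c : ℤ}
    (h : windSet γ v = {c, c + 1}) : topw γ v = c + 1 / 2 := by
  rw [topw, h, Finset.sum_pair (by simp), Finset.card_pair (by simp)]
  push_cast
  ring

lemma topw_eq_of_isVertex {γ : LatticeCycle} {v : ℤ × ℤ} (hv : γ.isVertex v) {c : ℤ}
    (h : ∀ p ∉ γ.image, wind γ p = c ∨ wind γ p = c + 1) : topw γ v = c + 1 / 2 := by
  obtain ⟨a, ha, b, hb, hab⟩ := γ.exists_mem_windSet_abs_sub_eq_one hv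
  exact topw_eq_of_windSet_eq
    (Finset.eq_pair_of_subset_of_abs_sub_eq_one (windSet_subset h v) ha hb hab)

/-- At a vertex `v` of `γ`, `topw(γ,v) = 1/2` if `γ` is
counterclockwise oriented, and `topw(γ,v) = -1/2` if `γ` is clockwise oriented. -/
theorem topw_at_vertex (γ : LatticeCycle) (v : ℤ × ℤ) (hv : γ.isVertex v) :
    (γ.ccw → topw γ v = 1/2) ∧ (γ.cw → topw γ v = -(1/2)) := by
  constructor
  · intro hccw
    simpa using topw_eq_of_isVertex hv (c := 0) fun p hp => by simpa using hccw p hp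
  · intro hcw
    rw [topw_eq_of_isVertex hv (c := -1) fun p hp => by simpa using hcw p hp]
    norm_num
end

section
/- Let γ be an oriented simple lattice cycle. Then the sum of col(v)·topw(γ,v) over the vertices v of γ equals 0: Σ_{v vertex of γ} col(v)·topw(γ,v) = 0. -/
open scoped Classical

/-!
At a vertex `v` of `γ` the winding numbers of the four points of `N_v` take exactly two
consecutive values: going around `v` they change only across the two edges of `γ` at `v`, by
`+1` across one and `-1` across the other. Consecutive vertices share the two unit squares
flanking the edge between them, whose winding numbers differ by one, so they have the same set
of values and hence the same topological weight. Thus `topw` is constant along `γ`, and the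
claim reduces to `∑ col (vᵢ) = 0`, which holds because colours alternate along the cycle.
-/

open Finset Function

lemma Int.cast_add_half_lt_cast_iff {a b : ℤ} : (a : ℝ) + 1 / 2 < b ↔ a < b := by
  constructor
  · intro h
    by_contra! h'
    have : (b : ℝ) ≤ a := by exact_mod_cast h'
    linarith
  · intro h
    have : (a : ℝ) + 1 ≤ b := by exact_mod_cast h
    linarith

lemma Int.cast_le_add_half_and_lt_iff {a b : ℤ} :
    ((a : ℝ) ≤ b + 1 / 2 ∧ (b : ℝ) + 1 / 2 < a + 1) ↔ a = b := by
  have hle : (a : ℝ) ≤ b + 1 / 2 ↔ a ≤ b := by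
    rw [← not_lt, Int.cast_add_half_lt_cast_iff, not_lt]
  have hlt : (b : ℝ) + 1 / 2 < a + 1 ↔ b ≤ a := by
    simpa [Int.lt_add_one_iff] using Int.cast_add_half_lt_cast_iff (a := b) (b := a + 1)
  rw [hle, hlt, le_antisymm_iff]

lemma Finset.eq_pair_of_subset_Icc {s : Finset ℤ} {m w : ℤ} (hs : s ⊆ Icc m (m + 1))
    (hw : w ∈ s) (hw' : w + 1 ∈ s) : s = {w, w + 1} := by
  have hm := mem_Icc.1 (hs hw)
  have hm' := mem_Icc.1 (hs hw')
  ext a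
  simp only [mem_insert, mem_singleton]
  constructor
  · intro ha
    have := mem_Icc.1 (hs ha)
    omega
  · rintro (rfl | rfl) <;> assumption

lemma col_eq_neg_of_step {u w : ℤ × ℤ}
    (h : w - u = (1, 0) ∨ w - u = (-1, 0) ∨ w - u = (0, 1) ∨ w - u = (0, -1)) :
    col w = -col u := by
  obtain ⟨u₁, u₂⟩ := u
  obtain ⟨w₁, w₂⟩ := w
  simp only [Prod.mk_sub_mk, Prod.mk.injEq] at h
  simp only [col, Int.even_iff]
  rcases h with h | h | h | h <;> split_ifs <;> omega

noncomputable def cellCenter (a b : ℤ) : ℝ × ℝ := ((a : ℝ) + 1 / 2, (b : ℝ) + 1 / 2)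

lemma vcross_cellCenter (u w : ℤ × ℤ) (a b : ℤ) :
    vcross u w (cellCenter a b) =
      if w = (u.1, u.2 + 1) ∧ a < u.1 ∧ u.2 = b then 1
      else if u = (w.1, w.2 + 1) ∧ a < w.1 ∧ w.2 = b then -1 else 0 := by
  simp only [vcross, cellCenter, Int.cast_add_half_lt_cast_iff, Int.cast_le_add_half_and_lt_iff]

namespace LatticeCycle

variable (γ : LatticeCycle)

lemma n_pos : 0 < γ.n := by
  have := γ.four_le
  omega

lemma periodic_v : Periodic γ.v γ.n := γ.periodic

lemma v_n_eq_v_zero : γ.v γ.n = γ.v 0 := by simpa using γ.periodic 0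

lemma v_eq_v_iff {i j : ℕ} : γ.v i = γ.v j ↔ i ≡ j [MOD γ.n] := by
  rw [← γ.periodic_v.map_mod_nat i, ← γ.periodic_v.map_mod_nat j]
  exact ⟨γ.inj _ _ (Nat.mod_lt _ γ.n_pos) (Nat.mod_lt _ γ.n_pos), congrArg γ.v⟩

lemma v_succ_eq_v_succ_iff {i j : ℕ} : γ.v (i + 1) = γ.v (j + 1) ↔ γ.v i = γ.v j := by
  simp only [v_eq_v_iff]
  exact ⟨Nat.ModEq.add_right_cancel' 1, Nat.ModEq.add_right 1⟩

lemma v_ne_v_add_two (k : ℕ) : γ.v k ≠ γ.v (k + 2) := by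
  rw [Ne, v_eq_v_iff]
  intro h
  have h02 : 0 ≡ 2 [MOD γ.n] := Nat.ModEq.add_left_cancel' k h
  have := γ.four_le
  rw [Nat.ModEq, Nat.mod_eq_of_lt (by omega), Nat.mod_eq_of_lt (by omega)] at h02
  omega

lemma sum_range_comp_v_succ {M : Type*} [AddCancelCommMonoid M] (f : ℤ × ℤ → M) :
    ∑ i ∈ range γ.n, f (γ.v (i + 1)) = ∑ i ∈ range γ.n, f (γ.v i) := by
  have h := sum_range_succ' (fun i => f (γ.v i)) γ.n
  rw [sum_range_succ, γ.v_n_eq_v_zero] at h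
  exact (add_right_cancel h).symm

lemma sum_col_v_eq_zero : ∑ i ∈ range γ.n, (col (γ.v i) : ℚ) = 0 := by
  have h := γ.sum_range_comp_v_succ fun v => (col v : ℚ)
  simp only [col_eq_neg_of_step (γ.step _), Int.cast_neg, sum_neg_distrib] at h
  linarith

lemma sum_ite_v_eq_and (k : ℕ) (P : ℤ × ℤ → ℤ × ℤ → Prop) [DecidableRel P] :
    ∑ j ∈ range γ.n, (if γ.v j = γ.v k ∧ P (γ.v j) (γ.v (j + 1)) then (1 : ℤ) else 0) =
      if P (γ.v k) (γ.v (k + 1)) then 1 else 0 := by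
  have hk : γ.v (k % γ.n) = γ.v k := γ.periodic_v.map_mod_nat k
  rw [sum_eq_single_of_mem (k % γ.n) (mem_range.2 (Nat.mod_lt _ γ.n_pos))]
  · rw [hk, γ.v_succ_eq_v_succ_iff.2 hk]
    simp
  · intro j hj hne
    rw [if_neg]
    rintro ⟨h, -⟩
    exact hne ((γ.v_eq_v_iff.1 (h.trans hk.symm)).eq_of_lt_of_lt
      (mem_range.1 hj) (Nat.mod_lt _ γ.n_pos))

def edgeFlow (s t : ℤ × ℤ) : ℤ :=
  ∑ i ∈ range γ.n, ((if γ.v i = s ∧ γ.v (i + 1) = t then 1 else 0) -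
    (if γ.v i = t ∧ γ.v (i + 1) = s then 1 else 0))

lemma edgeFlow_swap (s t : ℤ × ℤ) : γ.edgeFlow t s = -γ.edgeFlow s t := by
  simp only [edgeFlow, ← sum_neg_distrib, neg_sub]

lemma edgeFlow_v_succ (k : ℕ) (s : ℤ × ℤ) :
    γ.edgeFlow (γ.v (k + 1)) s =
      (if γ.v (k + 2) = s then 1 else 0) - (if γ.v k = s then 1 else 0) := by
  have hout := γ.sum_ite_v_eq_and (k + 1) (fun _ b => b = s)
  have hin := γ.sum_ite_v_eq_and k (fun a _ => a = s)
  simp only [edgeFlow, sum_sub_distrib, hout, γ.v_succ_eq_v_succ_iff, and_comm (a := γ.v _ = s),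
    hin]

lemma edgeFlow_v_succ_v_add_two (k : ℕ) : γ.edgeFlow (γ.v (k + 1)) (γ.v (k + 2)) = 1 := by
  rw [edgeFlow_v_succ, if_pos rfl, if_neg (γ.v_ne_v_add_two k), sub_zero]

lemma wind_cellCenter_left_sub (x y : ℤ) :
    wind γ (cellCenter (x - 1) y) - wind γ (cellCenter x y) = γ.edgeFlow (x, y) (x, y + 1) := by
  rw [wind, wind, edgeFlow, ← sum_sub_distrib]
  refine sum_congr rfl fun i _ => ?_
  rw [vcross_cellCenter, vcross_cellCenter]
  generalize γ.v i = u, γ.v (i + 1) = w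
  obtain ⟨u₁, u₂⟩ := u
  obtain ⟨w₁, w₂⟩ := w
  simp only [Prod.mk.injEq]
  split_ifs <;> omega

lemma wind_cellCenter_below_sub (x y : ℤ) :
    wind γ (cellCenter x (y - 1)) - wind γ (cellCenter x y) = γ.edgeFlow (x + 1, y) (x, y) := by
  -- Lowering the ray changes the count only by the vertical edges with an endpoint on the
  -- lattice ray `{(a, y) | x < a}`; apart from the horizontal edge `(x, y) — (x + 1, y)`,
  -- the change at each step of `γ` is a difference of the indicator `onRay`, which telescopes.
  set onRay : ℤ × ℤ → ℤ := fun p => if p.2 = y ∧ x < p.1 then 1 else 0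
  have hterm : ∀ i, vcross (γ.v i) (γ.v (i + 1)) (cellCenter x (y - 1)) -
      vcross (γ.v i) (γ.v (i + 1)) (cellCenter x y) -
      ((if γ.v i = (x + 1, y) ∧ γ.v (i + 1) = (x, y) then 1 else 0) -
        (if γ.v i = (x, y) ∧ γ.v (i + 1) = (x + 1, y) then 1 else 0)) =
      onRay (γ.v (i + 1)) - onRay (γ.v i) := by
    intro i
    have hstep := γ.step i
    rw [vcross_cellCenter, vcross_cellCenter]
    generalize γ.v i = u, γ.v (i + 1) = w at hstep ⊢
    obtain ⟨u₁, u₂⟩ := u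
    obtain ⟨w₁, w₂⟩ := w
    simp only [onRay, Prod.mk.injEq, Prod.mk_sub_mk] at hstep ⊢
    rcases hstep with h | h | h | h <;> split_ifs <;> omega
  rw [← sub_eq_zero, wind, wind, edgeFlow, ← sum_sub_distrib, ← sum_sub_distrib,
    sum_congr rfl fun i _ => hterm i, sum_sub_distrib, γ.sum_range_comp_v_succ onRay, sub_self]

lemma windSet_eq_wind_cellCenter (x y : ℤ) :
    windSet γ (x, y) = {wind γ (cellCenter (x - 1) (y - 1)), wind γ (cellCenter (x - 1) y),
      wind γ (cellCenter x (y - 1)), wind γ (cellCenter x y)} := by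
  have hneg : ∀ a : ℤ, (a : ℝ) + ((-1 : ℤ) : ℝ) / 2 = ((a - 1 : ℤ) : ℝ) + 1 / 2 := by
    intro a
    push_cast
    ring
  simp only [windSet, corner, cellCenter, hneg, Int.cast_one]

lemma wind_cellCenter_mem_windSet {x y a b : ℤ} (ha : x - 1 ≤ a ∧ a ≤ x)
    (hb : y - 1 ≤ b ∧ b ≤ y) : wind γ (cellCenter a b) ∈ windSet γ (x, y) := by
  rw [windSet_eq_wind_cellCenter]
  obtain rfl | rfl : a = x - 1 ∨ a = x := by omega
  all_goals obtain rfl | rfl : b = y - 1 ∨ b = y := by omega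
  all_goals simp

lemma exists_windSet_v_succ_subset_Icc (k : ℕ) :
    ∃ m, windSet γ (γ.v (k + 1)) ⊆ Icc m (m + 1) := by
  -- Counterclockwise around `v = (x, y)` the four values change by the flows out of `v` towards
  -- `(x, y + 1)`, `(x - 1, y)`, `(x, y - 1)`, `(x + 1, y)`. Only the edges to the next and to
  -- the previous vertex carry flow, `+1` and `-1`, so the values span at most two integers.
  have hflow := γ.edgeFlow_v_succ k
  have hnext := γ.step (k + 1)
  have hprev := γ.step k
  rcases hv : γ.v (k + 1) with ⟨x, y⟩
  rw [hv] at hflow hnext hprev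
  have hU := γ.wind_cellCenter_left_sub x y
  have hL := γ.wind_cellCenter_below_sub (x - 1) y
  have hD := γ.wind_cellCenter_left_sub x (y - 1)
  have hR := γ.wind_cellCenter_below_sub x y
  rw [sub_add_cancel] at hL hD
  rw [edgeFlow_swap] at hD hR
  rw [hflow] at hU hL hD hR
  generalize γ.v (k + 2) = p at *
  generalize γ.v k = q at *
  obtain ⟨p₁, p₂⟩ := p
  obtain ⟨q₁, q₂⟩ := q
  simp only [Prod.mk.injEq, Prod.mk_sub_mk] at hnext hprev hU hL hD hR
  refine ⟨min (min (wind γ (cellCenter (x - 1) (y - 1))) (wind γ (cellCenter (x - 1) y)))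
    (min (wind γ (cellCenter x (y - 1))) (wind γ (cellCenter x y))), ?_⟩
  simp only [subset_iff, windSet_eq_wind_cellCenter, mem_insert, mem_singleton,
    forall_eq_or_imp, forall_eq, mem_Icc]
  rcases hnext with h | h | h | h <;> rcases hprev with h' | h' | h' | h' <;>
    simp (disch := omega) only [if_pos, if_neg] at hU hL hD hR <;> omega

lemma exists_mem_windSet_v_succ_and_v_add_two (k : ℕ) :
    ∃ w, w ∈ windSet γ (γ.v (k + 1)) ∧ w + 1 ∈ windSet γ (γ.v (k + 1)) ∧
      w ∈ windSet γ (γ.v (k + 2)) ∧ w + 1 ∈ windSet γ (γ.v (k + 2)) := by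
  have hflow := γ.edgeFlow_v_succ_v_add_two k
  have hnext := γ.step (k + 1)
  rcases hv : γ.v (k + 1) with ⟨x, y⟩
  rw [hv] at hflow hnext
  generalize γ.v (k + 2) = p at *
  obtain ⟨p₁, p₂⟩ := p
  simp only [Prod.mk.injEq, Prod.mk_sub_mk] at hnext
  rcases hnext with h | h | h | h
  · obtain ⟨rfl, rfl⟩ : p₁ = x + 1 ∧ y = p₂ := by omega
    have hc := γ.wind_cellCenter_below_sub x y
    rw [edgeFlow_swap, hflow] at hc
    refine ⟨wind γ (cellCenter x (y - 1)), ?_⟩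
    rw [show wind γ (cellCenter x (y - 1)) + 1 = wind γ (cellCenter x y) by omega]
    refine ⟨?_, ?_, ?_, ?_⟩ <;> apply wind_cellCenter_mem_windSet <;> omega
  · obtain ⟨rfl, rfl⟩ : p₁ = x - 1 ∧ y = p₂ := by omega
    have hc := γ.wind_cellCenter_below_sub (x - 1) y
    rw [sub_add_cancel, hflow] at hc
    refine ⟨wind γ (cellCenter (x - 1) y), ?_⟩
    rw [show wind γ (cellCenter (x - 1) y) + 1 = wind γ (cellCenter (x - 1) (y - 1)) by omega]
    refine ⟨?_, ?_, ?_, ?_⟩ <;> apply wind_cellCenter_mem_windSet <;> omega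
  · obtain ⟨rfl, rfl⟩ : x = p₁ ∧ p₂ = y + 1 := by omega
    have hc := γ.wind_cellCenter_left_sub x y
    rw [hflow] at hc
    refine ⟨wind γ (cellCenter x y), ?_⟩
    rw [show wind γ (cellCenter x y) + 1 = wind γ (cellCenter (x - 1) y) by omega]
    refine ⟨?_, ?_, ?_, ?_⟩ <;> apply wind_cellCenter_mem_windSet <;> omega
  · obtain ⟨rfl, rfl⟩ : x = p₁ ∧ p₂ = y - 1 := by omega
    have hc := γ.wind_cellCenter_left_sub x (y - 1)
    rw [sub_add_cancel, edgeFlow_swap, hflow] at hc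
    refine ⟨wind γ (cellCenter (x - 1) (y - 1)), ?_⟩
    rw [show wind γ (cellCenter (x - 1) (y - 1)) + 1 = wind γ (cellCenter x (y - 1)) by omega]
    refine ⟨?_, ?_, ?_, ?_⟩ <;> apply wind_cellCenter_mem_windSet <;> omega

lemma windSet_v_succ_eq_windSet_v_add_two (k : ℕ) :
    windSet γ (γ.v (k + 1)) = windSet γ (γ.v (k + 2)) := by
  obtain ⟨w, h₁, h₁', h₂, h₂'⟩ := γ.exists_mem_windSet_v_succ_and_v_add_two k
  obtain ⟨m₁, hm₁⟩ := γ.exists_windSet_v_succ_subset_Icc k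
  obtain ⟨m₂, hm₂⟩ := γ.exists_windSet_v_succ_subset_Icc (k + 1)
  rw [eq_pair_of_subset_Icc hm₁ h₁ h₁', eq_pair_of_subset_Icc hm₂ h₂ h₂']

lemma topw_v_succ_eq_topw_v_one (k : ℕ) : topw γ (γ.v (k + 1)) = topw γ (γ.v 1) := by
  induction k with
  | zero => rfl
  | succ k ih => rw [← ih, topw, topw, γ.windSet_v_succ_eq_windSet_v_add_two k]

end LatticeCycle

/-- The sum of `col(v)·topw(γ,v)` over the vertices of `γ` is `0`. -/
theorem sum_col_topw_vertices_eq_zero (γ : LatticeCycle) :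
    ∑ i ∈ Finset.range γ.n, (col (γ.v i) : ℚ) * topw γ (γ.v i) = 0 := by
  calc ∑ i ∈ range γ.n, (col (γ.v i) : ℚ) * topw γ (γ.v i)
      = ∑ i ∈ range γ.n, (col (γ.v (i + 1)) : ℚ) * topw γ (γ.v (i + 1)) :=
        (γ.sum_range_comp_v_succ fun v => (col v : ℚ) * topw γ v).symm
    _ = (∑ i ∈ range γ.n, (col (γ.v (i + 1)) : ℚ)) * topw γ (γ.v 1) := by
        simp only [γ.topw_v_succ_eq_topw_v_one, sum_mul]
    _ = 0 := by
        rw [γ.sum_range_comp_v_succ fun v => (col v : ℚ), γ.sum_col_v_eq_zero, zero_mul]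
end
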